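/- arXiv:1804.08025 — 2 statements merged into one kernel-verified Lean document; each statement's English description precedes it below -/
import Mathlib

section
/- Let V ⊂ ℙⁿ be a hypersurface of degree d and p ∈ V. The order of osculation μ_p(V) = sup_L ord_p(V,L) (supremum over lines L through p) equals the least k ∈ ℕ such that Z_p^k = {p}, where Z_p^k = { q ∈ ℙⁿ : f_1(p,q) = ⋯ = f_k(p,q) = 0 }. -/
/-!
STATEMENT 5: For a hypersurface `V = Z(f) ⊂ ℙⁿ` (`f` squarefree homogeneous of degree
`d`) and `p ∈ V`, the order of osculation `μ_p(V) = sup_L ord_p(V,L)` (supremum over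
lines `L` through `p`) equals the least `k ∈ ℕ` with `Z_p^k = {p}`, where
`Z_p^k = {q ∈ ℙⁿ : f_1(p,q) = ⋯ = f_k(p,q) = 0}`.

We work with nonzero representatives in `K^{n+1}`.  Lines through `p` correspond to
nonzero `q` that are not scalar multiples of `p`; the order of contact of the line
through `p` and `q` is the `t`-adic valuation (in `ℕ∞`, `⊤` if the line lies in `V`)
of `f(p + t q)`.  The condition `Z_p^k = {p}` says every nonzero `q` satisfying the
defining equations of `Z_p^k` is a scalar multiple of `p`.
-/

open MvPolynomial Polynomial
open scoped Classical

/-- The `k`-th directional Taylor coefficient `f_k(x,y)`, characterized by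
`f(x + t y) = Σ_k f_k(x,y) t^k / k!`. -/
noncomputable def dirCoeff {K : Type} [CommRing K] {n : ℕ}
    (f : MvPolynomial (Fin (n + 1)) K) (k : ℕ) :
    MvPolynomial (Fin (n + 1) ⊕ Fin (n + 1)) K :=
  (k.factorial : MvPolynomial (Fin (n + 1) ⊕ Fin (n + 1)) K) *
    (Polynomial.coeff
      (MvPolynomial.aeval
        (fun i => Polynomial.C (MvPolynomial.X (Sum.inl i)) +
          Polynomial.X * Polynomial.C (MvPolynomial.X (Sum.inr i))) f) k)

/-- The restriction of `f` to the line `t ↦ p + t q`. -/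
noncomputable def linePoly {K : Type} [CommRing K] {n : ℕ}
    (f : MvPolynomial (Fin (n + 1)) K) (p q : Fin (n + 1) → K) : Polynomial K :=
  MvPolynomial.aeval (fun i => Polynomial.C (p i) + Polynomial.X * Polynomial.C (q i)) f

/-- Order of contact at `p` of the line through `p` and `q` with `Z(f)`. -/
noncomputable def contactOrder {K : Type} [Field K] {n : ℕ}
    (f : MvPolynomial (Fin (n + 1)) K) (p q : Fin (n + 1) → K) : ℕ∞ :=
  if linePoly f p q = 0 then ⊤ else ((linePoly f p q).rootMultiplicity 0 : ℕ∞)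

/-- The order of osculation `μ_p(V)`: supremum of orders of contact over the lines
through `p` (represented by nonzero `q` not proportional to `p`). -/
noncomputable def oscOrder {K : Type} [Field K] {n : ℕ}
    (f : MvPolynomial (Fin (n + 1)) K) (p : Fin (n + 1) → K) : ℕ∞ :=
  ⨆ q : {q : Fin (n + 1) → K // q ≠ 0 ∧ ¬∃ c : K, q = c • p},
    contactOrder f p (q : Fin (n + 1) → K)

/-- The condition `Z_p^k = {p}`. -/
def ZpkTrivial {K : Type} [Field K] {n : ℕ}
    (f : MvPolynomial (Fin (n + 1)) K) (p : Fin (n + 1) → K) (k : ℕ) : Prop :=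
  ∀ q : Fin (n + 1) → K, q ≠ 0 →
    (∀ j, 1 ≤ j → j ≤ k → MvPolynomial.eval (Sum.elim p q) (dirCoeff f j) = 0) →
      ∃ c : K, q = c • p

lemma map_aeval_line {K : Type} [CommRing K] {n : ℕ}
    (f : MvPolynomial (Fin (n + 1)) K) (p q : Fin (n + 1) → K) :
    Polynomial.map (MvPolynomial.eval (Sum.elim p q))
      (MvPolynomial.aeval
        (fun i => Polynomial.C (MvPolynomial.X (Sum.inl i)) +
          Polynomial.X * Polynomial.C (MvPolynomial.X (Sum.inr i))) f)
      = linePoly f p q := by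
  induction f using MvPolynomial.induction_on with
  | C a => simp [linePoly]
  | add f g hf hg => simp [linePoly, map_add] at *; rw [hf, hg]
  | mul_X f i hf =>
      simp only [linePoly, map_mul, Polynomial.map_mul, MvPolynomial.aeval_X] at *
      rw [hf]
      simp [linePoly]

lemma eval_dirCoeff {K : Type} [CommRing K] {n : ℕ}
    (f : MvPolynomial (Fin (n + 1)) K) (p q : Fin (n + 1) → K) (j : ℕ) :
    MvPolynomial.eval (Sum.elim p q) (dirCoeff f j)
      = (j.factorial : K) * (linePoly f p q).coeff j := by
  rw [← map_aeval_line f p q, Polynomial.coeff_map, dirCoeff]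
  simp

lemma coeff_zero_linePoly {K : Type} [CommRing K] {n : ℕ}
    (f : MvPolynomial (Fin (n + 1)) K) (p q : Fin (n + 1) → K) :
    (linePoly f p q).coeff 0 = MvPolynomial.eval p f := by
  rw [Polynomial.coeff_zero_eq_eval_zero]
  induction f using MvPolynomial.induction_on with
  | C a => simp [linePoly]
  | add f g hf hg => simp only [linePoly, map_add, Polynomial.eval_add] at *; rw [hf, hg]
  | mul_X f i hf =>
      simp only [linePoly, map_mul, MvPolynomial.aeval_X, Polynomial.eval_mul] at *
      rw [hf]; simp

lemma dirCoeff_vanish_iff {K : Type} [Field K] [CharZero K] {n : ℕ}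
    (f : MvPolynomial (Fin (n + 1)) K) (p q : Fin (n + 1) → K)
    (hpV : MvPolynomial.eval p f = 0) (m : ℕ) :
    (∀ j, 1 ≤ j → j ≤ m → MvPolynomial.eval (Sum.elim p q) (dirCoeff f j) = 0)
      ↔ (m : ℕ∞) < contactOrder f p q := by
  have hco : ∀ j, MvPolynomial.eval (Sum.elim p q) (dirCoeff f j) = 0
      ↔ (linePoly f p q).coeff j = 0 := by
    intro j
    rw [eval_dirCoeff]
    constructor
    · intro h
      rcases mul_eq_zero.mp h with h | h
      · exact absurd h (by exact_mod_cast j.factorial_ne_zero)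
      · exact h
    · intro h; rw [h, mul_zero]
  have hall : (∀ j, 1 ≤ j → j ≤ m → MvPolynomial.eval (Sum.elim p q) (dirCoeff f j) = 0)
      ↔ ∀ j < m + 1, (linePoly f p q).coeff j = 0 := by
    constructor
    · intro h j hj
      rcases Nat.eq_zero_or_pos j with rfl | hj1
      · rw [coeff_zero_linePoly]; exact hpV
      · exact (hco j).mp (h j hj1 (Nat.lt_succ_iff.mp hj))
    · intro h j hj1 hjm
      exact (hco j).mpr (h j (Nat.lt_succ_iff.mpr hjm))
  rw [hall, contactOrder]
  split_ifs with h0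
  · constructor
    · intro _
      exact WithTop.coe_lt_top m
    · intro _ j _
      rw [h0, Polynomial.coeff_zero]
  · rw [← Polynomial.X_pow_dvd_iff]
    have hX : (Polynomial.X : Polynomial K) ^ (m + 1)
        = (Polynomial.X - Polynomial.C 0) ^ (m + 1) := by simp
    rw [hX, ← Polynomial.le_rootMultiplicity_iff h0, Nat.cast_lt]
    exact Nat.succ_le_iff

theorem oscOrder_eq_least
    (K : Type) [Field K] [IsAlgClosed K] [CharZero K] (n d : ℕ) (hn : 1 ≤ n)
    (f : MvPolynomial (Fin (n + 1)) K) (hf : f.IsHomogeneous d) (hsf : Squarefree f)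
    (p : Fin (n + 1) → K) (hp : p ≠ 0) (hpV : MvPolynomial.eval p f = 0) (k : ℕ) :
    oscOrder f p = (k : ℕ∞) ↔ IsLeast {m : ℕ | ZpkTrivial f p m} k := by
  have key : ∀ m : ℕ, ZpkTrivial f p m ↔ oscOrder f p ≤ (m : ℕ∞) := by
    intro m
    constructor
    · intro h
      rw [oscOrder]
      apply iSup_le
      rintro ⟨q, hq0, hqnp⟩
      by_contra hlt
      push_neg at hlt
      exact hqnp (h q hq0 ((dirCoeff_vanish_iff f p q hpV m).mpr hlt))
    · intro h q hq0 hj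
      by_contra hc
      have h1 : (m : ℕ∞) < contactOrder f p q := (dirCoeff_vanish_iff f p q hpV m).mp hj
      have h2 : contactOrder f p q ≤ oscOrder f p :=
        le_iSup (fun q : {q : Fin (n + 1) → K // q ≠ 0 ∧ ¬∃ c : K, q = c • p} =>
          contactOrder f p (q : Fin (n + 1) → K)) ⟨q, hq0, hc⟩
      exact absurd (h1.trans_le (h2.trans h)) (lt_irrefl _)
  constructor
  · intro he
    refine ⟨(key k).mpr (le_of_eq he), fun m hm => ?_⟩
    have h1 : oscOrder f p ≤ (m : ℕ∞) := (key m).mp hm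
    rw [he] at h1
    exact_mod_cast h1
  · rintro ⟨hk, hleast⟩
    have h1 : oscOrder f p ≤ (k : ℕ∞) := (key k).mp hk
    rcases eq_or_lt_of_le h1 with h | h
    · exact h
    · obtain ⟨m, hm, hmk⟩ := WithTop.lt_iff_exists_coe.mp h
      have hmk' : m < k := WithTop.coe_lt_coe.mp hmk
      have : ZpkTrivial f p m := (key m).mpr (le_of_eq hm)
      exact absurd (hleast this) (Nat.not_le.mpr hmk')
end

section
/- Let V ⊂ ℙⁿ be a hypersurface of degree d, f a squarefree defining polynomial, and g ∈ K[x₀,…,xₙ] homogeneous of degree e ≥ 1. Set R_{V,g}(x) = Res^y_{(1,…,n,e)}(f_1(x,y),…,f_n(x,y),g(y)), the resultant with respect to y of the polynomials f_1,…,f_n (of y-degrees 1,…,n) together with g(y). Then for p ∈ V with g(p) ≠ 0, R_{V,g}(p) = 0 if and only if p is a flex point of V. -/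
/-!
The resultant vanishes exactly when the system has a common zero `z ≠ 0`, i.e. `g z = 0` and
`t ↦ f (p + t • z)` vanishes to order `n + 1` at `0` (its constant term is `f p = 0`, and the
factorials are units in characteristic zero). Such a `z` is not a multiple of `p`, as `g p ≠ 0`.

Conversely, if `q` is a flex direction then so is every `q + c • p`: by homogeneity
`f (p + t • (q + c • p)) = F (t, 1 + c t)`, where `F (x₀, x₁) = f (x₁ • p + x₀ • q)` is the
homogenization of `t ↦ f (p + t • q) = F (t, 1)`, so `t ^ (n + 1) ∣ F (t, 1)` gives
`t ^ (n + 1) ∣ F (t, 1 + c t)`. Among these directions `g` has a zero, because `c ↦ g (q + c • p)`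
has leading coefficient `g p ≠ 0` in degree `e ≥ 1` and `K` is algebraically closed.
-/

open MvPolynomial Polynomial
open scoped Classical

/-- The `j`-th directional Taylor coefficient `f_j(p, y)` of `f`, specialized at
`x = p`, as a polynomial in the variables `y`; it is characterized by
`f(p + t y) = Σ_j f_j(p,y) t^j / j!`. -/
noncomputable def sliceCoeff {K : Type} [CommRing K] {n : ℕ}
    (f : MvPolynomial (Fin (n + 1)) K) (p : Fin (n + 1) → K) (j : ℕ) :
    MvPolynomial (Fin (n + 1)) K :=
  (j.factorial : MvPolynomial (Fin (n + 1)) K) *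
    (Polynomial.coeff
      (MvPolynomial.aeval
        (fun i => Polynomial.C (MvPolynomial.C (p i)) +
          Polynomial.X * Polynomial.C (MvPolynomial.X i)) f) j)

namespace Polynomial

variable {R : Type*} [CommSemiring R]

lemma eval_homogenize_cons_zero (P : R[X]) (n : ℕ) (c : R) :
    MvPolynomial.eval ![c, 0] (P.homogenize n) = c ^ n * P.coeff n := by
  rw [homogenize, map_sum, Finset.sum_eq_single (n, 0)]
  · simp [MvPolynomial.eval_monomial, mul_comm]
  · rintro ⟨k, l⟩ hkl hne
    have hl : l ≠ 0 := by
      rintro rfl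
      exact hne (by simpa using hkl)
    simp [MvPolynomial.eval_monomial, hl]
  · simp

lemma X_pow_dvd_aeval_homogenize {N : ℕ} {P : R[X]} (h : X ^ N ∣ P) (d : ℕ) (u : R[X]) :
    X ^ N ∣ MvPolynomial.aeval ![X, u] (P.homogenize d) := by
  rw [homogenize, map_sum]
  refine Finset.dvd_sum fun kl _ => ?_
  by_cases hk : N ≤ kl.1
  · rw [MvPolynomial.aeval_monomial, Finsupp.prod_fintype _ _ fun _ => pow_zero _,
      Fin.prod_univ_two]
    simpa using ((pow_dvd_pow X hk).mul_right (u ^ kl.2)).mul_left (C (P.coeff kl.1))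
  · simp [X_pow_dvd_iff.mp h kl.1 (by omega)]

end Polynomial

namespace MvPolynomial

variable (σ R : Type*) [CommSemiring R]

/-- Polynomials in `t` whose `t ^ j`-coefficient is homogeneous of degree `j`. -/
def coeffHomogeneousSubalgebra : Subalgebra R (MvPolynomial σ R)[X] where
  carrier := {P | ∀ j, (P.coeff j).IsHomogeneous j}
  mul_mem' {P Q} hP hQ j := by
    rw [Polynomial.coeff_mul]
    exact IsHomogeneous.sum _ _ _ fun kl hkl =>
      Finset.HasAntidiagonal.mem_antidiagonal.mp hkl ▸ (hP kl.1).mul (hQ kl.2)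
  add_mem' hP hQ j := by
    rw [Polynomial.coeff_add]
    exact (hP j).add (hQ j)
  algebraMap_mem' a j := by
    rw [Polynomial.algebraMap_apply, Polynomial.coeff_C]
    split_ifs with hj
    · exact hj ▸ isHomogeneous_C σ a
    · exact isHomogeneous_zero σ R j

variable {σ R}

lemma X_mul_C_X_mem_coeffHomogeneousSubalgebra (i : σ) :
    Polynomial.X * Polynomial.C (X i) ∈ coeffHomogeneousSubalgebra σ R := fun j => by
  rw [Polynomial.X_mul_C, Polynomial.coeff_C_mul_X]
  split_ifs with hj
  · exact hj ▸ isHomogeneous_X R i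
  · exact isHomogeneous_zero σ R j

end MvPolynomial

section LineRestriction

variable {K : Type} {n d : ℕ}

section CommRing

variable [CommRing K] {f : MvPolynomial (Fin (n + 1)) K}

lemma eval_linePoly (f : MvPolynomial (Fin (n + 1)) K) (p q : Fin (n + 1) → K) (t : K) :
    (linePoly f p q).eval t = MvPolynomial.eval (p + t • q) f := by
  rw [← Polynomial.coe_aeval_eq_eval, linePoly, MvPolynomial.comp_aeval_apply,
    ← MvPolynomial.aeval_eq_eval]
  congr with i
  simp [mul_comm t]

lemma coeff_linePoly_zero (f : MvPolynomial (Fin (n + 1)) K) (p q : Fin (n + 1) → K) :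
    (linePoly f p q).coeff 0 = MvPolynomial.eval p f := by
  simp [Polynomial.coeff_zero_eq_eval_zero, eval_linePoly]

lemma eval_sliceCoeff (f : MvPolynomial (Fin (n + 1)) K) (p z : Fin (n + 1) → K) (j : ℕ) :
    MvPolynomial.eval z (sliceCoeff f p j) = j.factorial * (linePoly f p z).coeff j := by
  rw [sliceCoeff, map_mul, map_natCast, ← MvPolynomial.coe_aeval_eq_eval,
    ← Polynomial.coeff_map, ← Polynomial.coe_mapAlgHom, MvPolynomial.comp_aeval_apply, linePoly]
  congr 2 with i
  simp

lemma isHomogeneous_sliceCoeff (f : MvPolynomial (Fin (n + 1)) K) (p : Fin (n + 1) → K) (j : ℕ) :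
    (sliceCoeff f p j).IsHomogeneous j := by
  set v := fun i => Polynomial.C (MvPolynomial.C (p i)) +
    Polynomial.X * Polynomial.C (MvPolynomial.X i)
  have hle : Algebra.adjoin K (Set.range v) ≤
      MvPolynomial.coeffHomogeneousSubalgebra (Fin (n + 1)) K :=
    Algebra.adjoin_le <| Set.range_subset_iff.2 fun i =>
      add_mem (Subalgebra.algebraMap_mem _ (p i))
        (MvPolynomial.X_mul_C_X_mem_coeffHomogeneousSubalgebra i)
  have hmem := hle (MvPolynomial.aeval_range (R := K) v ▸ AlgHom.mem_range_self _ f)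
  rw [sliceCoeff, ← map_natCast MvPolynomial.C]
  exact (hmem j).C_mul _

lemma isHomogeneous_lastCases_sliceCoeff {e : ℕ} {g : MvPolynomial (Fin (n + 1)) K}
    (hg : g.IsHomogeneous e) (f : MvPolynomial (Fin (n + 1)) K) (p : Fin (n + 1) → K)
    (i : Fin (n + 1)) :
    (Fin.lastCases g (fun j : Fin n => sliceCoeff f p (j + 1)) i :
      MvPolynomial (Fin (n + 1)) K).IsHomogeneous (Fin.lastCases e (fun j : Fin n => j + 1) i) := by
  induction i using Fin.lastCases with
  | last => simpa using hg
  | cast j => simpa using isHomogeneous_sliceCoeff f p (j + 1)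

/-- The binary form `(x₀, x₁) ↦ f (x₁ • p + x₀ • q)`: `X 0` carries the line parameter because
`Polynomial.homogenize` dehomogenizes at `X 1 = 1`. -/
noncomputable def lineForm (f : MvPolynomial (Fin (n + 1)) K) (p q : Fin (n + 1) → K) :
    MvPolynomial (Fin 2) K :=
  MvPolynomial.aeval (fun i => MvPolynomial.C (p i) * MvPolynomial.X 1 +
    MvPolynomial.C (q i) * MvPolynomial.X 0) f

lemma aeval_lineForm {A : Type*} [CommRing A] [Algebra K A] (v : Fin 2 → A)
    (f : MvPolynomial (Fin (n + 1)) K) (p q : Fin (n + 1) → K) :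
    MvPolynomial.aeval v (lineForm f p q) =
      MvPolynomial.aeval (fun i => algebraMap K A (p i) * v 1 + algebraMap K A (q i) * v 0) f := by
  rw [lineForm, MvPolynomial.comp_aeval_apply]
  simp

lemma eval_lineForm (v : Fin 2 → K) (f : MvPolynomial (Fin (n + 1)) K)
    (p q : Fin (n + 1) → K) :
    MvPolynomial.eval v (lineForm f p q) =
      MvPolynomial.eval (fun i => p i * v 1 + q i * v 0) f := by
  simpa using aeval_lineForm v f p q

lemma isHomogeneous_lineForm (hf : f.IsHomogeneous d) (p q : Fin (n + 1) → K) :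
    (lineForm f p q).IsHomogeneous d := by
  simpa only [one_mul, lineForm] using
    hf.aeval _ fun i => (isHomogeneous_C_mul_X (p i) 1).add (isHomogeneous_C_mul_X (q i) 0)

lemma homogenize_linePoly (hf : f.IsHomogeneous d) (p q : Fin (n + 1) → K) :
    (linePoly f p q).homogenize d = lineForm f p q :=
  homogenize_eq_of_isHomogeneous (isHomogeneous_lineForm hf p q) <| by
    simp [aeval_lineForm, linePoly]

lemma linePoly_add_smul (hf : f.IsHomogeneous d) (p q : Fin (n + 1) → K) (c : K) :
    linePoly f p (q + c • p) =
      MvPolynomial.aeval ![Polynomial.X, 1 + Polynomial.C c * Polynomial.X]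
        ((linePoly f p q).homogenize d) := by
  rw [homogenize_linePoly hf, aeval_lineForm, linePoly]
  refine congrArg (MvPolynomial.aeval · f) (funext fun i => ?_)
  simp only [Pi.add_apply, Pi.smul_apply, smul_eq_mul, Polynomial.algebraMap_eq,
    Matrix.cons_val_one, Matrix.cons_val_zero, Polynomial.C_add, Polynomial.C_mul]
  ring

lemma X_pow_dvd_linePoly_add_smul (hf : f.IsHomogeneous d) {p q : Fin (n + 1) → K} {N : ℕ}
    (h : Polynomial.X ^ N ∣ linePoly f p q) (c : K) :
    Polynomial.X ^ N ∣ linePoly f p (q + c • p) := by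
  rw [linePoly_add_smul hf]
  exact X_pow_dvd_aeval_homogenize h d _

lemma MvPolynomial.IsHomogeneous.eval_smul_eq_coeff_linePoly (hf : f.IsHomogeneous d)
    (c : K) (p q : Fin (n + 1) → K) :
    MvPolynomial.eval (c • p) f = c ^ d * (linePoly f q p).coeff d := by
  rw [← eval_homogenize_cons_zero, homogenize_linePoly hf, eval_lineForm]
  congr with i
  simp [mul_comm]

lemma MvPolynomial.IsHomogeneous.coeff_linePoly (hf : f.IsHomogeneous d) (p q : Fin (n + 1) → K) :
    (linePoly f q p).coeff d = MvPolynomial.eval p f := by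
  simpa using (hf.eval_smul_eq_coeff_linePoly 1 p q).symm

lemma MvPolynomial.IsHomogeneous.eval_smul (hf : f.IsHomogeneous d) (c : K) (p : Fin (n + 1) → K) :
    MvPolynomial.eval (c • p) f = c ^ d * MvPolynomial.eval p f := by
  rw [hf.eval_smul_eq_coeff_linePoly c p p, hf.coeff_linePoly]

end CommRing

variable [Field K] {f : MvPolynomial (Fin (n + 1)) K}

lemma le_contactOrder_iff (f : MvPolynomial (Fin (n + 1)) K) (p q : Fin (n + 1) → K) (N : ℕ) :
    (N : ℕ∞) ≤ contactOrder f p q ↔ Polynomial.X ^ N ∣ linePoly f p q := by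
  rw [contactOrder]
  split_ifs with h
  · simp [h]
  · rw [Nat.cast_le, le_rootMultiplicity_iff h, map_zero, sub_zero]

lemma MvPolynomial.IsHomogeneous.exists_eval_add_smul_eq_zero [IsAlgClosed K]
    (hf : f.IsHomogeneous d) (hd : d ≠ 0) {p : Fin (n + 1) → K} (hfp : MvPolynomial.eval p f ≠ 0)
    (q : Fin (n + 1) → K) : ∃ c : K, MvPolynomial.eval (q + c • p) f = 0 := by
  have hcoeff : (linePoly f q p).coeff d ≠ 0 := hf.coeff_linePoly p q ▸ hfp
  have hdeg : (linePoly f q p).degree ≠ 0 := fun h0 =>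
    hcoeff <| coeff_eq_zero_of_natDegree_lt <|
      natDegree_eq_of_degree_eq_some h0 ▸ Nat.pos_of_ne_zero hd
  obtain ⟨c, hc⟩ := IsAlgClosed.exists_root _ hdeg
  exact ⟨c, by rwa [IsRoot, eval_linePoly] at hc⟩

lemma forall_eval_lastCases_sliceCoeff_eq_zero_iff [CharZero K] {p : Fin (n + 1) → K}
    (hpf : MvPolynomial.eval p f = 0)
    (g : MvPolynomial (Fin (n + 1)) K) (z : Fin (n + 1) → K) :
    (∀ i, MvPolynomial.eval z (Fin.lastCases g (fun j : Fin n => sliceCoeff f p (j + 1)) i) = 0) ↔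
      MvPolynomial.eval z g = 0 ∧ Polynomial.X ^ (n + 1) ∣ linePoly f p z := by
  simp only [Fin.forall_fin_succ', Fin.lastCases_castSucc, Fin.lastCases_last, eval_sliceCoeff,
    mul_eq_zero, Nat.cast_eq_zero, Nat.factorial_ne_zero, false_or, X_pow_dvd_iff]
  rw [and_comm]
  refine and_congr_right' ⟨fun h m hm => ?_, fun h j => h _ (by omega)⟩
  cases m with
  | zero => rwa [coeff_linePoly_zero]
  | succ m => exact h ⟨m, by omega⟩

end LineRestriction

theorem resultant_vanishes_iff_flex_general
    (K : Type) [Field K] [IsAlgClosed K] [CharZero K] (n d e : ℕ)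
    (he : 1 ≤ e)
    -- the abstract multivariate resultant for degrees (1, 2, …, n, e):
    (Res : (Fin (n + 1) → MvPolynomial (Fin (n + 1)) K) → K)
    (hRes : ∀ sys : Fin (n + 1) → MvPolynomial (Fin (n + 1)) K,
      (∀ i, (sys i).IsHomogeneous
        (Fin.lastCases e (fun j : Fin n => (j : ℕ) + 1) i)) →
      (Res sys = 0 ↔ ∃ z : Fin (n + 1) → K, z ≠ 0 ∧ ∀ i, MvPolynomial.eval z (sys i) = 0))
    (f : MvPolynomial (Fin (n + 1)) K) (hf : f.IsHomogeneous d)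
    (g : MvPolynomial (Fin (n + 1)) K) (hg : g.IsHomogeneous e)
    (p : Fin (n + 1) → K) (hpV : MvPolynomial.eval p f = 0)
    (hgp : MvPolynomial.eval p g ≠ 0) :
    Res (Fin.lastCases g (fun j : Fin n => sliceCoeff f p ((j : ℕ) + 1))) = 0 ↔
      ∃ q : Fin (n + 1) → K, q ≠ 0 ∧ (¬∃ c : K, q = c • p) ∧
        ((n + 1 : ℕ) : ℕ∞) ≤ contactOrder f p q := by
  simp only [hRes _ (isHomogeneous_lastCases_sliceCoeff hg f p),
    forall_eval_lastCases_sliceCoeff_eq_zero_iff hpV, le_contactOrder_iff]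
  constructor
  · rintro ⟨z, hz, hgz, hdvd⟩
    refine ⟨z, hz, ?_, hdvd⟩
    rintro ⟨c, rfl⟩
    rw [hg.eval_smul] at hgz
    exact hz (by rw [eq_zero_of_pow_eq_zero ((mul_eq_zero.mp hgz).resolve_right hgp), zero_smul])
  · rintro ⟨q, -, hqp, hdvd⟩
    obtain ⟨c, hc⟩ := hg.exists_eval_add_smul_eq_zero (by omega) hgp q
    refine ⟨q + c • p, fun h => hqp ⟨-c, ?_⟩, hc, X_pow_dvd_linePoly_add_smul hf hdvd c⟩
    rw [neg_smul, ← sub_eq_zero, sub_neg_eq_add, h]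

theorem resultant_vanishes_iff_flex
    (K : Type) [Field K] [IsAlgClosed K] [CharZero K] (n d e : ℕ) (hn : 1 ≤ n)
    (he : 1 ≤ e)
    -- the abstract multivariate resultant for degrees (1, 2, …, n, e):
    (Res : (Fin (n + 1) → MvPolynomial (Fin (n + 1)) K) → K)
    (hRes : ∀ sys : Fin (n + 1) → MvPolynomial (Fin (n + 1)) K,
      (∀ i, (sys i).IsHomogeneous
        (Fin.lastCases e (fun j : Fin n => (j : ℕ) + 1) i)) →
      (Res sys = 0 ↔ ∃ z : Fin (n + 1) → K, z ≠ 0 ∧ ∀ i, MvPolynomial.eval z (sys i) = 0))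
    (f : MvPolynomial (Fin (n + 1)) K) (hf : f.IsHomogeneous d) (hsf : Squarefree f)
    (g : MvPolynomial (Fin (n + 1)) K) (hg : g.IsHomogeneous e)
    (p : Fin (n + 1) → K) (hp : p ≠ 0) (hpV : MvPolynomial.eval p f = 0)
    (hgp : MvPolynomial.eval p g ≠ 0) :
    Res (Fin.lastCases g (fun j : Fin n => sliceCoeff f p ((j : ℕ) + 1))) = 0 ↔
      ∃ q : Fin (n + 1) → K, q ≠ 0 ∧ (¬∃ c : K, q = c • p) ∧
        ((n + 1 : ℕ) : ℕ∞) ≤ contactOrder f p q :=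
  resultant_vanishes_iff_flex_general K n d e he Res hRes f hf g hg p hpV hgp
end
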